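/- Let A be the localization of the quantum affine space K_Λ[T1,...,T6] (with the Λ-matrix of U_q(sl4^+)) at the multiplicative set generated by T4, T5, T6. Then the center of A is the polynomial ring K[z1, z2] where z1 = T1 T4 T6 T3 and z2 = T2 T5. -/
import Mathlib


noncomputable section

/-- The matrix of exponents of `q` in the multiplicatively antisymmetric matrix
`Λ` of `U_q(sl4^+)`: `Λ i j = q ^ (E i j)`. -/
def Emat : Matrix (Fin 6) (Fin 6) ℤ :=
  !![0, 1, 1, -1, -1, 0;
     -1, 0, 1, 1, 0, -1;
     -1, -1, 0, 0, 1, 1;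
     1, -1, 0, 0, 1, -1;
     1, 0, -1, -1, 0, 1;
     0, 1, -1, 1, -1, 0]

/-- The monomial `T₁^{g₁} ⋯ T₆^{g₆}` in a quantum torus with invertible
generators `T : Fin 6 → Pˣ`. -/
def tmono {P : Type} [Ring P] (T : Fin 6 → Pˣ) (g : Fin 6 → ℤ) : P :=
  ((T 0 ^ g 0 * T 1 ^ g 1 * T 2 ^ g 2 * T 3 ^ g 3 * T 4 ^ g 4 * T 5 ^ g 5 : Pˣ) : P)

/-- Monomials of the localization `A₄` of quantum affine space `K_Λ[T₁,…,T₆]`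
at the multiplicative set generated by `T₄, T₅, T₆`: here `T : Fin 6 → P`
with `u k` a unit equal to `T (3+k)` for `k = 0,1,2`. -/
def amono {P : Type} [Ring P] (T : Fin 6 → P) (u : Fin 3 → Pˣ)
    (a : Fin 6 → ℤ) : P :=
  T 0 ^ (a 0).toNat * T 1 ^ (a 1).toNat * T 2 ^ (a 2).toNat *
    ((u 0 ^ a 3 : Pˣ) : P) * ((u 1 ^ a 4 : Pˣ) : P) * ((u 2 ^ a 5 : Pˣ) : P)

section Aux

def evec (i : Fin 6) : Fin 6 → ℤ := fun j => if j = i then 1 else 0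

def Lexp (a : Fin 6 → ℤ) (i : Fin 6) : ℤ := ∑ j, if j < i then Emat i j * a j else 0
def Rexp (a : Fin 6 → ℤ) (i : Fin 6) : ℤ := ∑ j, if i < j then Emat j i * a j else 0

variable {K : Type} [Field K] {P : Type} [Ring P] [Algebra K P]

lemma qval {q : K} (hq0 : q ≠ 0) (z : ℤ) : ((Units.mk0 q hq0 ^ z : Kˣ) : K) = q ^ z := by
  rw [Units.val_zpow_eq_zpow_val, Units.val_mk0]

lemma commN {t x : P} {c : K} (h : t * x = c • (x * t)) :
    ∀ n : ℕ, t * x ^ n = c ^ n • (x ^ n * t) := by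
  intro n
  induction n with
  | zero => simp
  | succ n ih =>
    rw [pow_succ, ← mul_assoc, ih, smul_mul_assoc, mul_assoc, h, mul_smul_comm, smul_smul,
      ← mul_assoc, ← pow_succ]

lemma commN' {t x : P} {c : K} (h : x * t = c • (t * x)) :
    ∀ n : ℕ, x ^ n * t = c ^ n • (t * x ^ n) := by
  intro n
  induction n with
  | zero => simp
  | succ n ih =>
    rw [pow_succ, mul_assoc, h, mul_smul_comm, ← mul_assoc, ih, smul_mul_assoc, smul_smul,
      mul_assoc, ← pow_succ']

lemma commZ {t : P} {v : Pˣ} {c : Kˣ} (h : t * ↑v = (c:K) • ((v:P) * t)) :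
    ∀ m : ℤ, t * ↑(v ^ m) = ((c ^ m : Kˣ) : K) • ((↑(v ^ m):P) * t) := by
  have hinv : t * ((v⁻¹ : Pˣ) : P) = ((c⁻¹ : Kˣ) : K) • (((v⁻¹:Pˣ):P) * t) := by
    have h1 : ((v⁻¹:Pˣ):P) * t = (c:K) • (t * ((v⁻¹:Pˣ):P)) := by
      have h2 := congrArg (fun y => ((v⁻¹:Pˣ):P) * y * ((v⁻¹:Pˣ):P)) h
      simp only [mul_smul_comm, smul_mul_assoc] at h2
      calc ((v⁻¹:Pˣ):P) * t = ((v⁻¹:Pˣ):P) * (t * ↑v) * ((v⁻¹:Pˣ):P) := by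
            rw [mul_assoc, mul_assoc, Units.mul_inv, mul_one]
        _ = (c:K) • (((v⁻¹:Pˣ):P) * (↑v * t) * ((v⁻¹:Pˣ):P)) := h2
        _ = (c:K) • (t * ((v⁻¹:Pˣ):P)) := by rw [← mul_assoc, Units.inv_mul, one_mul]
    calc t * ((v⁻¹:Pˣ):P) = ((c⁻¹:Kˣ):K) • ((c:K) • (t * ((v⁻¹:Pˣ):P))) := by
          rw [smul_smul]; norm_cast; simp
      _ = ((c⁻¹:Kˣ):K) • (((v⁻¹:Pˣ):P) * t) := by rw [← h1]
  intro m
  rcases m with n | n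
  · simpa [zpow_natCast, Units.val_pow_eq_pow_val] using commN h n
  · have := commN hinv (n+1)
    simpa [zpow_negSucc, ← inv_pow, Units.val_pow_eq_pow_val] using this

lemma commZ' {t : P} {v : Pˣ} {c : Kˣ} (h : (↑v:P) * t = (c:K) • (t * ↑v)) :
    ∀ m : ℤ, (↑(v ^ m):P) * t = ((c ^ m : Kˣ) : K) • (t * ↑(v ^ m)) := by
  intro m
  have h' : t * (↑v:P) = ((c⁻¹:Kˣ):K) • ((↑v:P) * t) := by
    rw [h, smul_smul]; norm_cast; simp
  have := commZ h' m
  rw [this, smul_smul]; norm_cast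
  simp [← mul_zpow]

lemma push {t x y : P} {c d : K} (hx : t * x = c • (x * t)) (hy : t * y = d • (y * t)) :
    t * (x * y) = (c * d) • (x * y * t) := by
  rw [← mul_assoc, hx, smul_mul_assoc, mul_assoc, hy, mul_smul_comm, smul_smul, ← mul_assoc]

lemma push_r {t x y : P} {c d : K} (hx : x * t = c • (t * x)) (hy : y * t = d • (t * y)) :
    (x * y) * t = (c * d) • (t * (x * y)) := by
  rw [mul_assoc, hy, mul_smul_comm, ← mul_assoc, hx, smul_mul_assoc, smul_smul, mul_assoc,
    mul_comm d c]

variable {q : K} {T : Fin 6 → P} {u : Fin 3 → Pˣ}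

theorem Lmul0 (hq0 : q ≠ 0) (hu0 : (u 0 : P) = T 3) (hu1 : (u 1 : P) = T 4)
    (hu2 : (u 2 : P) = T 5)
    (hrel : ∀ i j : Fin 6, T i * T j = (q ^ Emat i j) • (T j * T i))
    {a : Fin 6 → ℤ} (h0 : 0 ≤ a 0) (h1 : 0 ≤ a 1) (h2 : 0 ≤ a 2) :
    T 0 * amono T u a = (q ^ (Lexp a 0)) • amono T u (a + evec 0) := by

  have hmerge : T 0 * T 0 ^ (a 0).toNat = T 0 ^ ((a 0).toNat + 1) := (pow_succ' _ _).symm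
  have hsplit : amono T u a = T 0 ^ (a 0).toNat * (T 1 ^ (a 1).toNat * T 2 ^ (a 2).toNat * ((u 0 ^ a 3 : Pˣ) : P) * ((u 1 ^ a 4 : Pˣ) : P) * ((u 2 ^ a 5 : Pˣ) : P)) := by simp only [amono, mul_assoc]
  have ht : (a 0 + 1).toNat = (a 0).toNat + 1 := by omega
  have hsplit' : amono T u (a + evec 0) = T 0 ^ ((a 0).toNat + 1) * (T 1 ^ (a 1).toNat * T 2 ^ (a 2).toNat * ((u 0 ^ a 3 : Pˣ) : P) * ((u 1 ^ a 4 : Pˣ) : P) * ((u 2 ^ a 5 : Pˣ) : P)) := by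
    simp only [amono, Pi.add_apply, evec]
    simp (config := { decide := true }) [mul_assoc, ht]
  rw [hsplit, ← mul_assoc, hmerge, hsplit']
  have hz : (Lexp a 0) = 0 := by simp [Lexp, Fin.sum_univ_six]
  rw [hz, zpow_zero, one_smul]

theorem Lmul1 (hq0 : q ≠ 0) (hu0 : (u 0 : P) = T 3) (hu1 : (u 1 : P) = T 4)
    (hu2 : (u 2 : P) = T 5)
    (hrel : ∀ i j : Fin 6, T i * T j = (q ^ Emat i j) • (T j * T i))
    {a : Fin 6 → ℤ} (h0 : 0 ≤ a 0) (h1 : 0 ≤ a 1) (h2 : 0 ≤ a 2) :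
    T 1 * amono T u a = (q ^ (Lexp a 1)) • amono T u (a + evec 1) := by

  have c0 := commN (hrel 1 0) (a 0).toNat
  have hmerge : T 1 * T 1 ^ (a 1).toNat = T 1 ^ ((a 1).toNat + 1) := (pow_succ' _ _).symm
  have hsplit : amono T u a = T 0 ^ (a 0).toNat * (T 1 ^ (a 1).toNat * (T 2 ^ (a 2).toNat * ((u 0 ^ a 3 : Pˣ) : P) * ((u 1 ^ a 4 : Pˣ) : P) * ((u 2 ^ a 5 : Pˣ) : P))) := by simp only [amono, mul_assoc]
  have ht : (a 1 + 1).toNat = (a 1).toNat + 1 := by omega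
  have hsplit' : amono T u (a + evec 1) = T 0 ^ (a 0).toNat * (T 1 ^ ((a 1).toNat + 1) * (T 2 ^ (a 2).toNat * ((u 0 ^ a 3 : Pˣ) : P) * ((u 1 ^ a 4 : Pˣ) : P) * ((u 2 ^ a 5 : Pˣ) : P))) := by
    simp only [amono, Pi.add_apply, evec]
    simp (config := { decide := true }) [mul_assoc, ht]
  have hside := c0
  rw [hsplit, ← mul_assoc, hside, smul_mul_assoc, mul_assoc (T 0 ^ (a 0).toNat), ← mul_assoc (T 1), hmerge, hsplit']
  congr 1
  have hL : Lexp a 1 = Emat 1 0 * a 0 := by simp (config := { decide := true }) [Lexp, Fin.sum_univ_six]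
  rw [hL]
  rw [← zpow_natCast (q ^ (Emat 1 0)) ((a 0).toNat), ← zpow_mul, Int.toNat_of_nonneg h0]
  try congr 1
  try ring

theorem Lmul2 (hq0 : q ≠ 0) (hu0 : (u 0 : P) = T 3) (hu1 : (u 1 : P) = T 4)
    (hu2 : (u 2 : P) = T 5)
    (hrel : ∀ i j : Fin 6, T i * T j = (q ^ Emat i j) • (T j * T i))
    {a : Fin 6 → ℤ} (h0 : 0 ≤ a 0) (h1 : 0 ≤ a 1) (h2 : 0 ≤ a 2) :
    T 2 * amono T u a = (q ^ (Lexp a 2)) • amono T u (a + evec 2) := by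

  have c0 := commN (hrel 2 0) (a 0).toNat
  have c1 := commN (hrel 2 1) (a 1).toNat
  have hmerge : T 2 * T 2 ^ (a 2).toNat = T 2 ^ ((a 2).toNat + 1) := (pow_succ' _ _).symm
  have hsplit : amono T u a = T 0 ^ (a 0).toNat * T 1 ^ (a 1).toNat * (T 2 ^ (a 2).toNat * (((u 0 ^ a 3 : Pˣ) : P) * ((u 1 ^ a 4 : Pˣ) : P) * ((u 2 ^ a 5 : Pˣ) : P))) := by simp only [amono, mul_assoc]
  have ht : (a 2 + 1).toNat = (a 2).toNat + 1 := by omega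
  have hsplit' : amono T u (a + evec 2) = T 0 ^ (a 0).toNat * T 1 ^ (a 1).toNat * (T 2 ^ ((a 2).toNat + 1) * (((u 0 ^ a 3 : Pˣ) : P) * ((u 1 ^ a 4 : Pˣ) : P) * ((u 2 ^ a 5 : Pˣ) : P))) := by
    simp only [amono, Pi.add_apply, evec]
    simp (config := { decide := true }) [mul_assoc, ht]
  have hside := (push c0 c1)
  rw [hsplit, ← mul_assoc, hside, smul_mul_assoc, mul_assoc (T 0 ^ (a 0).toNat * T 1 ^ (a 1).toNat), ← mul_assoc (T 2), hmerge, hsplit']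
  congr 1
  have hL : Lexp a 2 = Emat 2 0 * a 0 + Emat 2 1 * a 1 := by simp (config := { decide := true }) [Lexp, Fin.sum_univ_six]
  rw [hL]
  rw [← zpow_natCast (q ^ (Emat 2 0)) ((a 0).toNat), ← zpow_mul, Int.toNat_of_nonneg h0]
  rw [← zpow_natCast (q ^ (Emat 2 1)) ((a 1).toNat), ← zpow_mul, Int.toNat_of_nonneg h1]
  rw [← zpow_add₀ hq0]
  try congr 1
  try ring

theorem Lmul3 (hq0 : q ≠ 0) (hu0 : (u 0 : P) = T 3) (hu1 : (u 1 : P) = T 4)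
    (hu2 : (u 2 : P) = T 5)
    (hrel : ∀ i j : Fin 6, T i * T j = (q ^ Emat i j) • (T j * T i))
    {a : Fin 6 → ℤ} (h0 : 0 ≤ a 0) (h1 : 0 ≤ a 1) (h2 : 0 ≤ a 2) :
    T 3 * amono T u a = (q ^ (Lexp a 3)) • amono T u (a + evec 3) := by

  have c0 := commN (hrel 3 0) (a 0).toNat
  have c1 := commN (hrel 3 1) (a 1).toNat
  have c2 := commN (hrel 3 2) (a 2).toNat
  have hmerge : T 3 * ((u 0 ^ a 3 : Pˣ) : P) = ((u 0 ^ (a 3 + 1) : Pˣ) : P) := by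
    rw [← hu0, ← Units.val_mul, ← zpow_one_add, add_comm (1 : ℤ) (a 3)]
  have hsplit : amono T u a = T 0 ^ (a 0).toNat * T 1 ^ (a 1).toNat * T 2 ^ (a 2).toNat * (((u 0 ^ a 3 : Pˣ) : P) * (((u 1 ^ a 4 : Pˣ) : P) * ((u 2 ^ a 5 : Pˣ) : P))) := by simp only [amono, mul_assoc]
  have hsplit' : amono T u (a + evec 3) = T 0 ^ (a 0).toNat * T 1 ^ (a 1).toNat * T 2 ^ (a 2).toNat * (((u 0 ^ (a 3 + 1) : Pˣ) : P) * (((u 1 ^ a 4 : Pˣ) : P) * ((u 2 ^ a 5 : Pˣ) : P))) := by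
    simp only [amono, Pi.add_apply, evec]
    simp (config := { decide := true }) [mul_assoc]
  have hside := (push (push c0 c1) c2)
  rw [hsplit, ← mul_assoc, hside, smul_mul_assoc, mul_assoc (T 0 ^ (a 0).toNat * T 1 ^ (a 1).toNat * T 2 ^ (a 2).toNat), ← mul_assoc (T 3), hmerge, hsplit']
  congr 1
  have hL : Lexp a 3 = Emat 3 0 * a 0 + Emat 3 1 * a 1 + Emat 3 2 * a 2 := by simp (config := { decide := true }) [Lexp, Fin.sum_univ_six]
  rw [hL]
  rw [← zpow_natCast (q ^ (Emat 3 0)) ((a 0).toNat), ← zpow_mul, Int.toNat_of_nonneg h0]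
  rw [← zpow_natCast (q ^ (Emat 3 1)) ((a 1).toNat), ← zpow_mul, Int.toNat_of_nonneg h1]
  rw [← zpow_natCast (q ^ (Emat 3 2)) ((a 2).toNat), ← zpow_mul, Int.toNat_of_nonneg h2]
  rw [← zpow_add₀ hq0]
  rw [← zpow_add₀ hq0]
  try congr 1
  try ring

theorem Lmul4 (hq0 : q ≠ 0) (hu0 : (u 0 : P) = T 3) (hu1 : (u 1 : P) = T 4)
    (hu2 : (u 2 : P) = T 5)
    (hrel : ∀ i j : Fin 6, T i * T j = (q ^ Emat i j) • (T j * T i))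
    {a : Fin 6 → ℤ} (h0 : 0 ≤ a 0) (h1 : 0 ≤ a 1) (h2 : 0 ≤ a 2) :
    T 4 * amono T u a = (q ^ (Lexp a 4)) • amono T u (a + evec 4) := by

  have c0 := commN (hrel 4 0) (a 0).toNat
  have c1 := commN (hrel 4 1) (a 1).toNat
  have c2 := commN (hrel 4 2) (a 2).toNat
  have hb3 : T 4 * ((u 0 : Pˣ) : P) = ((Units.mk0 q hq0 ^ Emat 4 3 : Kˣ) : K) • (((u 0 : Pˣ) : P) * T 4) := by
    rw [hu0, qval hq0]; exact hrel 4 3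
  have c3 := commZ hb3 (a 3)
  have hmerge : T 4 * ((u 1 ^ a 4 : Pˣ) : P) = ((u 1 ^ (a 4 + 1) : Pˣ) : P) := by
    rw [← hu1, ← Units.val_mul, ← zpow_one_add, add_comm (1 : ℤ) (a 4)]
  have hsplit : amono T u a = T 0 ^ (a 0).toNat * T 1 ^ (a 1).toNat * T 2 ^ (a 2).toNat * ((u 0 ^ a 3 : Pˣ) : P) * (((u 1 ^ a 4 : Pˣ) : P) * (((u 2 ^ a 5 : Pˣ) : P))) := by simp only [amono, mul_assoc]
  have hsplit' : amono T u (a + evec 4) = T 0 ^ (a 0).toNat * T 1 ^ (a 1).toNat * T 2 ^ (a 2).toNat * ((u 0 ^ a 3 : Pˣ) : P) * (((u 1 ^ (a 4 + 1) : Pˣ) : P) * (((u 2 ^ a 5 : Pˣ) : P))) := by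
    simp only [amono, Pi.add_apply, evec]
    simp (config := { decide := true }) [mul_assoc]
  have hside := (push (push (push c0 c1) c2) c3)
  rw [hsplit, ← mul_assoc, hside, smul_mul_assoc, mul_assoc (T 0 ^ (a 0).toNat * T 1 ^ (a 1).toNat * T 2 ^ (a 2).toNat * ((u 0 ^ a 3 : Pˣ) : P)), ← mul_assoc (T 4), hmerge, hsplit']
  congr 1
  have hL : Lexp a 4 = Emat 4 0 * a 0 + Emat 4 1 * a 1 + Emat 4 2 * a 2 + Emat 4 3 * a 3 := by simp (config := { decide := true }) [Lexp, Fin.sum_univ_six]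
  rw [hL]
  rw [← zpow_natCast (q ^ (Emat 4 0)) ((a 0).toNat), ← zpow_mul, Int.toNat_of_nonneg h0]
  rw [← zpow_natCast (q ^ (Emat 4 1)) ((a 1).toNat), ← zpow_mul, Int.toNat_of_nonneg h1]
  rw [← zpow_natCast (q ^ (Emat 4 2)) ((a 2).toNat), ← zpow_mul, Int.toNat_of_nonneg h2]
  rw [← zpow_mul, qval hq0]
  rw [← zpow_add₀ hq0]
  rw [← zpow_add₀ hq0]
  rw [← zpow_add₀ hq0]
  try congr 1
  try ring

theorem Lmul5 (hq0 : q ≠ 0) (hu0 : (u 0 : P) = T 3) (hu1 : (u 1 : P) = T 4)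
    (hu2 : (u 2 : P) = T 5)
    (hrel : ∀ i j : Fin 6, T i * T j = (q ^ Emat i j) • (T j * T i))
    {a : Fin 6 → ℤ} (h0 : 0 ≤ a 0) (h1 : 0 ≤ a 1) (h2 : 0 ≤ a 2) :
    T 5 * amono T u a = (q ^ (Lexp a 5)) • amono T u (a + evec 5) := by

  have c0 := commN (hrel 5 0) (a 0).toNat
  have c1 := commN (hrel 5 1) (a 1).toNat
  have c2 := commN (hrel 5 2) (a 2).toNat
  have hb3 : T 5 * ((u 0 : Pˣ) : P) = ((Units.mk0 q hq0 ^ Emat 5 3 : Kˣ) : K) • (((u 0 : Pˣ) : P) * T 5) := by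
    rw [hu0, qval hq0]; exact hrel 5 3
  have c3 := commZ hb3 (a 3)
  have hb4 : T 5 * ((u 1 : Pˣ) : P) = ((Units.mk0 q hq0 ^ Emat 5 4 : Kˣ) : K) • (((u 1 : Pˣ) : P) * T 5) := by
    rw [hu1, qval hq0]; exact hrel 5 4
  have c4 := commZ hb4 (a 4)
  have hmerge : T 5 * ((u 2 ^ a 5 : Pˣ) : P) = ((u 2 ^ (a 5 + 1) : Pˣ) : P) := by
    rw [← hu2, ← Units.val_mul, ← zpow_one_add, add_comm (1 : ℤ) (a 5)]
  have hsplit : amono T u a = T 0 ^ (a 0).toNat * T 1 ^ (a 1).toNat * T 2 ^ (a 2).toNat * ((u 0 ^ a 3 : Pˣ) : P) * ((u 1 ^ a 4 : Pˣ) : P) * ((u 2 ^ a 5 : Pˣ) : P) := by simp only [amono, mul_assoc]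
  have hsplit' : amono T u (a + evec 5) = T 0 ^ (a 0).toNat * T 1 ^ (a 1).toNat * T 2 ^ (a 2).toNat * ((u 0 ^ a 3 : Pˣ) : P) * ((u 1 ^ a 4 : Pˣ) : P) * ((u 2 ^ (a 5 + 1) : Pˣ) : P) := by
    simp only [amono, Pi.add_apply, evec]
    simp (config := { decide := true }) [mul_assoc]
  have hside := (push (push (push (push c0 c1) c2) c3) c4)
  rw [hsplit, ← mul_assoc, hside, smul_mul_assoc, mul_assoc (T 0 ^ (a 0).toNat * T 1 ^ (a 1).toNat * T 2 ^ (a 2).toNat * ((u 0 ^ a 3 : Pˣ) : P) * ((u 1 ^ a 4 : Pˣ) : P)), hmerge, hsplit']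
  congr 1
  have hL : Lexp a 5 = Emat 5 0 * a 0 + Emat 5 1 * a 1 + Emat 5 2 * a 2 + Emat 5 3 * a 3 + Emat 5 4 * a 4 := by simp (config := { decide := true }) [Lexp, Fin.sum_univ_six]
  rw [hL]
  rw [← zpow_natCast (q ^ (Emat 5 0)) ((a 0).toNat), ← zpow_mul, Int.toNat_of_nonneg h0]
  rw [← zpow_natCast (q ^ (Emat 5 1)) ((a 1).toNat), ← zpow_mul, Int.toNat_of_nonneg h1]
  rw [← zpow_natCast (q ^ (Emat 5 2)) ((a 2).toNat), ← zpow_mul, Int.toNat_of_nonneg h2]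
  rw [← zpow_mul, qval hq0]
  rw [← zpow_mul, qval hq0]
  rw [← zpow_add₀ hq0]
  rw [← zpow_add₀ hq0]
  rw [← zpow_add₀ hq0]
  rw [← zpow_add₀ hq0]
  try congr 1
  try ring

theorem Rmul0 (hq0 : q ≠ 0) (hu0 : (u 0 : P) = T 3) (hu1 : (u 1 : P) = T 4)
    (hu2 : (u 2 : P) = T 5)
    (hrel : ∀ i j : Fin 6, T i * T j = (q ^ Emat i j) • (T j * T i))
    {a : Fin 6 → ℤ} (h0 : 0 ≤ a 0) (h1 : 0 ≤ a 1) (h2 : 0 ≤ a 2) :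
    amono T u a * T 0 = (q ^ (Rexp a 0)) • amono T u (a + evec 0) := by

  have c1 := commN' (hrel 1 0) (a 1).toNat
  have c2 := commN' (hrel 2 0) (a 2).toNat
  have hb3 : ((u 0 : Pˣ) : P) * T 0 = ((Units.mk0 q hq0 ^ Emat 3 0 : Kˣ) : K) • (T 0 * ((u 0 : Pˣ) : P)) := by
    rw [hu0, qval hq0]; exact hrel 3 0
  have c3 := commZ' hb3 (a 3)
  have hb4 : ((u 1 : Pˣ) : P) * T 0 = ((Units.mk0 q hq0 ^ Emat 4 0 : Kˣ) : K) • (T 0 * ((u 1 : Pˣ) : P)) := by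
    rw [hu1, qval hq0]; exact hrel 4 0
  have c4 := commZ' hb4 (a 4)
  have hb5 : ((u 2 : Pˣ) : P) * T 0 = ((Units.mk0 q hq0 ^ Emat 5 0 : Kˣ) : K) • (T 0 * ((u 2 : Pˣ) : P)) := by
    rw [hu2, qval hq0]; exact hrel 5 0
  have c5 := commZ' hb5 (a 5)
  have hmerge : T 0 ^ (a 0).toNat * T 0 = T 0 ^ ((a 0).toNat + 1) := (pow_succ _ _).symm
  have hsplit : amono T u a = T 0 ^ (a 0).toNat * (T 1 ^ (a 1).toNat * T 2 ^ (a 2).toNat * ((u 0 ^ a 3 : Pˣ) : P) * ((u 1 ^ a 4 : Pˣ) : P) * ((u 2 ^ a 5 : Pˣ) : P)) := by simp only [amono, mul_assoc]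
  have ht : (a 0 + 1).toNat = (a 0).toNat + 1 := by omega
  have hsplit' : amono T u (a + evec 0) = T 0 ^ ((a 0).toNat + 1) * (T 1 ^ (a 1).toNat * T 2 ^ (a 2).toNat * ((u 0 ^ a 3 : Pˣ) : P) * ((u 1 ^ a 4 : Pˣ) : P) * ((u 2 ^ a 5 : Pˣ) : P)) := by
    simp only [amono, Pi.add_apply, evec]
    simp (config := { decide := true }) [mul_assoc, ht]
  have hside := (push_r (push_r (push_r (push_r c1 c2) c3) c4) c5)
  rw [hsplit, mul_assoc, hside, mul_smul_comm, ← mul_assoc, hmerge, hsplit']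
  congr 1
  have hL : Rexp a 0 = Emat 1 0 * a 1 + Emat 2 0 * a 2 + Emat 3 0 * a 3 + Emat 4 0 * a 4 + Emat 5 0 * a 5 := by simp (config := { decide := true }) [Rexp, Fin.sum_univ_six]
  rw [hL]
  rw [← zpow_natCast (q ^ (Emat 1 0)) ((a 1).toNat), ← zpow_mul, Int.toNat_of_nonneg h1]
  rw [← zpow_natCast (q ^ (Emat 2 0)) ((a 2).toNat), ← zpow_mul, Int.toNat_of_nonneg h2]
  rw [← zpow_mul, qval hq0]
  rw [← zpow_mul, qval hq0]
  rw [← zpow_mul, qval hq0]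
  rw [← zpow_add₀ hq0]
  rw [← zpow_add₀ hq0]
  rw [← zpow_add₀ hq0]
  rw [← zpow_add₀ hq0]
  try congr 1
  try ring

theorem Rmul1 (hq0 : q ≠ 0) (hu0 : (u 0 : P) = T 3) (hu1 : (u 1 : P) = T 4)
    (hu2 : (u 2 : P) = T 5)
    (hrel : ∀ i j : Fin 6, T i * T j = (q ^ Emat i j) • (T j * T i))
    {a : Fin 6 → ℤ} (h0 : 0 ≤ a 0) (h1 : 0 ≤ a 1) (h2 : 0 ≤ a 2) :
    amono T u a * T 1 = (q ^ (Rexp a 1)) • amono T u (a + evec 1) := by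

  have c2 := commN' (hrel 2 1) (a 2).toNat
  have hb3 : ((u 0 : Pˣ) : P) * T 1 = ((Units.mk0 q hq0 ^ Emat 3 1 : Kˣ) : K) • (T 1 * ((u 0 : Pˣ) : P)) := by
    rw [hu0, qval hq0]; exact hrel 3 1
  have c3 := commZ' hb3 (a 3)
  have hb4 : ((u 1 : Pˣ) : P) * T 1 = ((Units.mk0 q hq0 ^ Emat 4 1 : Kˣ) : K) • (T 1 * ((u 1 : Pˣ) : P)) := by
    rw [hu1, qval hq0]; exact hrel 4 1
  have c4 := commZ' hb4 (a 4)
  have hb5 : ((u 2 : Pˣ) : P) * T 1 = ((Units.mk0 q hq0 ^ Emat 5 1 : Kˣ) : K) • (T 1 * ((u 2 : Pˣ) : P)) := by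
    rw [hu2, qval hq0]; exact hrel 5 1
  have c5 := commZ' hb5 (a 5)
  have hmerge : T 1 ^ (a 1).toNat * T 1 = T 1 ^ ((a 1).toNat + 1) := (pow_succ _ _).symm
  have hsplit : amono T u a = T 0 ^ (a 0).toNat * (T 1 ^ (a 1).toNat * (T 2 ^ (a 2).toNat * ((u 0 ^ a 3 : Pˣ) : P) * ((u 1 ^ a 4 : Pˣ) : P) * ((u 2 ^ a 5 : Pˣ) : P))) := by simp only [amono, mul_assoc]
  have ht : (a 1 + 1).toNat = (a 1).toNat + 1 := by omega
  have hsplit' : amono T u (a + evec 1) = T 0 ^ (a 0).toNat * (T 1 ^ ((a 1).toNat + 1) * (T 2 ^ (a 2).toNat * ((u 0 ^ a 3 : Pˣ) : P) * ((u 1 ^ a 4 : Pˣ) : P) * ((u 2 ^ a 5 : Pˣ) : P))) := by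
    simp only [amono, Pi.add_apply, evec]
    simp (config := { decide := true }) [mul_assoc, ht]
  have hside := (push_r (push_r (push_r c2 c3) c4) c5)
  rw [hsplit, mul_assoc (T 0 ^ (a 0).toNat), mul_assoc (T 1 ^ (a 1).toNat), hside, mul_smul_comm, mul_smul_comm, ← mul_assoc (T 1 ^ (a 1).toNat), hmerge, hsplit']
  congr 1
  have hL : Rexp a 1 = Emat 2 1 * a 2 + Emat 3 1 * a 3 + Emat 4 1 * a 4 + Emat 5 1 * a 5 := by simp (config := { decide := true }) [Rexp, Fin.sum_univ_six]
  rw [hL]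
  rw [← zpow_natCast (q ^ (Emat 2 1)) ((a 2).toNat), ← zpow_mul, Int.toNat_of_nonneg h2]
  rw [← zpow_mul, qval hq0]
  rw [← zpow_mul, qval hq0]
  rw [← zpow_mul, qval hq0]
  rw [← zpow_add₀ hq0]
  rw [← zpow_add₀ hq0]
  rw [← zpow_add₀ hq0]
  try congr 1
  try ring

theorem Rmul2 (hq0 : q ≠ 0) (hu0 : (u 0 : P) = T 3) (hu1 : (u 1 : P) = T 4)
    (hu2 : (u 2 : P) = T 5)
    (hrel : ∀ i j : Fin 6, T i * T j = (q ^ Emat i j) • (T j * T i))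
    {a : Fin 6 → ℤ} (h0 : 0 ≤ a 0) (h1 : 0 ≤ a 1) (h2 : 0 ≤ a 2) :
    amono T u a * T 2 = (q ^ (Rexp a 2)) • amono T u (a + evec 2) := by

  have hb3 : ((u 0 : Pˣ) : P) * T 2 = ((Units.mk0 q hq0 ^ Emat 3 2 : Kˣ) : K) • (T 2 * ((u 0 : Pˣ) : P)) := by
    rw [hu0, qval hq0]; exact hrel 3 2
  have c3 := commZ' hb3 (a 3)
  have hb4 : ((u 1 : Pˣ) : P) * T 2 = ((Units.mk0 q hq0 ^ Emat 4 2 : Kˣ) : K) • (T 2 * ((u 1 : Pˣ) : P)) := by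
    rw [hu1, qval hq0]; exact hrel 4 2
  have c4 := commZ' hb4 (a 4)
  have hb5 : ((u 2 : Pˣ) : P) * T 2 = ((Units.mk0 q hq0 ^ Emat 5 2 : Kˣ) : K) • (T 2 * ((u 2 : Pˣ) : P)) := by
    rw [hu2, qval hq0]; exact hrel 5 2
  have c5 := commZ' hb5 (a 5)
  have hmerge : T 2 ^ (a 2).toNat * T 2 = T 2 ^ ((a 2).toNat + 1) := (pow_succ _ _).symm
  have hsplit : amono T u a = T 0 ^ (a 0).toNat * T 1 ^ (a 1).toNat * (T 2 ^ (a 2).toNat * (((u 0 ^ a 3 : Pˣ) : P) * ((u 1 ^ a 4 : Pˣ) : P) * ((u 2 ^ a 5 : Pˣ) : P))) := by simp only [amono, mul_assoc]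
  have ht : (a 2 + 1).toNat = (a 2).toNat + 1 := by omega
  have hsplit' : amono T u (a + evec 2) = T 0 ^ (a 0).toNat * T 1 ^ (a 1).toNat * (T 2 ^ ((a 2).toNat + 1) * (((u 0 ^ a 3 : Pˣ) : P) * ((u 1 ^ a 4 : Pˣ) : P) * ((u 2 ^ a 5 : Pˣ) : P))) := by
    simp only [amono, Pi.add_apply, evec]
    simp (config := { decide := true }) [mul_assoc, ht]
  have hside := (push_r (push_r c3 c4) c5)
  rw [hsplit, mul_assoc (T 0 ^ (a 0).toNat * T 1 ^ (a 1).toNat), mul_assoc (T 2 ^ (a 2).toNat), hside, mul_smul_comm, mul_smul_comm, ← mul_assoc (T 2 ^ (a 2).toNat), hmerge, hsplit']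
  congr 1
  have hL : Rexp a 2 = Emat 3 2 * a 3 + Emat 4 2 * a 4 + Emat 5 2 * a 5 := by simp (config := { decide := true }) [Rexp, Fin.sum_univ_six]
  rw [hL]
  rw [← zpow_mul, qval hq0]
  rw [← zpow_mul, qval hq0]
  rw [← zpow_mul, qval hq0]
  rw [← zpow_add₀ hq0]
  rw [← zpow_add₀ hq0]
  try congr 1
  try ring

theorem Rmul3 (hq0 : q ≠ 0) (hu0 : (u 0 : P) = T 3) (hu1 : (u 1 : P) = T 4)
    (hu2 : (u 2 : P) = T 5)
    (hrel : ∀ i j : Fin 6, T i * T j = (q ^ Emat i j) • (T j * T i))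
    {a : Fin 6 → ℤ} (h0 : 0 ≤ a 0) (h1 : 0 ≤ a 1) (h2 : 0 ≤ a 2) :
    amono T u a * T 3 = (q ^ (Rexp a 3)) • amono T u (a + evec 3) := by

  have hb4 : ((u 1 : Pˣ) : P) * T 3 = ((Units.mk0 q hq0 ^ Emat 4 3 : Kˣ) : K) • (T 3 * ((u 1 : Pˣ) : P)) := by
    rw [hu1, qval hq0]; exact hrel 4 3
  have c4 := commZ' hb4 (a 4)
  have hb5 : ((u 2 : Pˣ) : P) * T 3 = ((Units.mk0 q hq0 ^ Emat 5 3 : Kˣ) : K) • (T 3 * ((u 2 : Pˣ) : P)) := by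
    rw [hu2, qval hq0]; exact hrel 5 3
  have c5 := commZ' hb5 (a 5)
  have hmerge : ((u 0 ^ a 3 : Pˣ) : P) * T 3 = ((u 0 ^ (a 3 + 1) : Pˣ) : P) := by
    rw [← hu0, ← Units.val_mul, ← zpow_add_one]
  have hsplit : amono T u a = T 0 ^ (a 0).toNat * T 1 ^ (a 1).toNat * T 2 ^ (a 2).toNat * (((u 0 ^ a 3 : Pˣ) : P) * (((u 1 ^ a 4 : Pˣ) : P) * ((u 2 ^ a 5 : Pˣ) : P))) := by simp only [amono, mul_assoc]
  have hsplit' : amono T u (a + evec 3) = T 0 ^ (a 0).toNat * T 1 ^ (a 1).toNat * T 2 ^ (a 2).toNat * (((u 0 ^ (a 3 + 1) : Pˣ) : P) * (((u 1 ^ a 4 : Pˣ) : P) * ((u 2 ^ a 5 : Pˣ) : P))) := by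
    simp only [amono, Pi.add_apply, evec]
    simp (config := { decide := true }) [mul_assoc]
  have hside := (push_r c4 c5)
  rw [hsplit, mul_assoc (T 0 ^ (a 0).toNat * T 1 ^ (a 1).toNat * T 2 ^ (a 2).toNat), mul_assoc (((u 0 ^ a 3 : Pˣ) : P)), hside, mul_smul_comm, mul_smul_comm, ← mul_assoc (((u 0 ^ a 3 : Pˣ) : P)), hmerge, hsplit']
  congr 1
  have hL : Rexp a 3 = Emat 4 3 * a 4 + Emat 5 3 * a 5 := by simp (config := { decide := true }) [Rexp, Fin.sum_univ_six]
  rw [hL]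
  rw [← zpow_mul, qval hq0]
  rw [← zpow_mul, qval hq0]
  rw [← zpow_add₀ hq0]
  try congr 1
  try ring

theorem Rmul4 (hq0 : q ≠ 0) (hu0 : (u 0 : P) = T 3) (hu1 : (u 1 : P) = T 4)
    (hu2 : (u 2 : P) = T 5)
    (hrel : ∀ i j : Fin 6, T i * T j = (q ^ Emat i j) • (T j * T i))
    {a : Fin 6 → ℤ} (h0 : 0 ≤ a 0) (h1 : 0 ≤ a 1) (h2 : 0 ≤ a 2) :
    amono T u a * T 4 = (q ^ (Rexp a 4)) • amono T u (a + evec 4) := by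

  have hb5 : ((u 2 : Pˣ) : P) * T 4 = ((Units.mk0 q hq0 ^ Emat 5 4 : Kˣ) : K) • (T 4 * ((u 2 : Pˣ) : P)) := by
    rw [hu2, qval hq0]; exact hrel 5 4
  have c5 := commZ' hb5 (a 5)
  have hmerge : ((u 1 ^ a 4 : Pˣ) : P) * T 4 = ((u 1 ^ (a 4 + 1) : Pˣ) : P) := by
    rw [← hu1, ← Units.val_mul, ← zpow_add_one]
  have hsplit : amono T u a = T 0 ^ (a 0).toNat * T 1 ^ (a 1).toNat * T 2 ^ (a 2).toNat * ((u 0 ^ a 3 : Pˣ) : P) * (((u 1 ^ a 4 : Pˣ) : P) * (((u 2 ^ a 5 : Pˣ) : P))) := by simp only [amono, mul_assoc]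
  have hsplit' : amono T u (a + evec 4) = T 0 ^ (a 0).toNat * T 1 ^ (a 1).toNat * T 2 ^ (a 2).toNat * ((u 0 ^ a 3 : Pˣ) : P) * (((u 1 ^ (a 4 + 1) : Pˣ) : P) * (((u 2 ^ a 5 : Pˣ) : P))) := by
    simp only [amono, Pi.add_apply, evec]
    simp (config := { decide := true }) [mul_assoc]
  have hside := c5
  rw [hsplit, mul_assoc (T 0 ^ (a 0).toNat * T 1 ^ (a 1).toNat * T 2 ^ (a 2).toNat * ((u 0 ^ a 3 : Pˣ) : P)), mul_assoc (((u 1 ^ a 4 : Pˣ) : P)), hside, mul_smul_comm, mul_smul_comm, ← mul_assoc (((u 1 ^ a 4 : Pˣ) : P)), hmerge, hsplit']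
  congr 1
  have hL : Rexp a 4 = Emat 5 4 * a 5 := by simp (config := { decide := true }) [Rexp, Fin.sum_univ_six]
  rw [hL]
  rw [← zpow_mul, qval hq0]
  try congr 1
  try ring

theorem Rmul5 (hq0 : q ≠ 0) (hu0 : (u 0 : P) = T 3) (hu1 : (u 1 : P) = T 4)
    (hu2 : (u 2 : P) = T 5)
    (hrel : ∀ i j : Fin 6, T i * T j = (q ^ Emat i j) • (T j * T i))
    {a : Fin 6 → ℤ} (h0 : 0 ≤ a 0) (h1 : 0 ≤ a 1) (h2 : 0 ≤ a 2) :
    amono T u a * T 5 = (q ^ (Rexp a 5)) • amono T u (a + evec 5) := by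

  have hmerge : ((u 2 ^ a 5 : Pˣ) : P) * T 5 = ((u 2 ^ (a 5 + 1) : Pˣ) : P) := by
    rw [← hu2, ← Units.val_mul, ← zpow_add_one]
  have hsplit : amono T u a = T 0 ^ (a 0).toNat * T 1 ^ (a 1).toNat * T 2 ^ (a 2).toNat * ((u 0 ^ a 3 : Pˣ) : P) * ((u 1 ^ a 4 : Pˣ) : P) * ((u 2 ^ a 5 : Pˣ) : P) := by simp only [amono, mul_assoc]
  have hsplit' : amono T u (a + evec 5) = T 0 ^ (a 0).toNat * T 1 ^ (a 1).toNat * T 2 ^ (a 2).toNat * ((u 0 ^ a 3 : Pˣ) : P) * ((u 1 ^ a 4 : Pˣ) : P) * ((u 2 ^ (a 5 + 1) : Pˣ) : P) := by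
    simp only [amono, Pi.add_apply, evec]
    simp (config := { decide := true }) [mul_assoc]
  rw [hsplit, mul_assoc, hmerge, hsplit']
  have hz : (Rexp a 5) = 0 := by simp [Rexp, Fin.sum_univ_six]
  rw [hz, zpow_zero, one_smul]


theorem Lmul (hq0 : q ≠ 0) (hu0 : (u 0 : P) = T 3) (hu1 : (u 1 : P) = T 4)
    (hu2 : (u 2 : P) = T 5)
    (hrel : ∀ i j : Fin 6, T i * T j = (q ^ Emat i j) • (T j * T i))
    {a : Fin 6 → ℤ} (h0 : 0 ≤ a 0) (h1 : 0 ≤ a 1) (h2 : 0 ≤ a 2) (i : Fin 6) :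
    T i * amono T u a = (q ^ (Lexp a i)) • amono T u (a + evec i) := by
  fin_cases i
  · exact Lmul0 hq0 hu0 hu1 hu2 hrel h0 h1 h2
  · exact Lmul1 hq0 hu0 hu1 hu2 hrel h0 h1 h2
  · exact Lmul2 hq0 hu0 hu1 hu2 hrel h0 h1 h2
  · exact Lmul3 hq0 hu0 hu1 hu2 hrel h0 h1 h2
  · exact Lmul4 hq0 hu0 hu1 hu2 hrel h0 h1 h2
  · exact Lmul5 hq0 hu0 hu1 hu2 hrel h0 h1 h2

theorem Rmul (hq0 : q ≠ 0) (hu0 : (u 0 : P) = T 3) (hu1 : (u 1 : P) = T 4)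
    (hu2 : (u 2 : P) = T 5)
    (hrel : ∀ i j : Fin 6, T i * T j = (q ^ Emat i j) • (T j * T i))
    {a : Fin 6 → ℤ} (h0 : 0 ≤ a 0) (h1 : 0 ≤ a 1) (h2 : 0 ≤ a 2) (i : Fin 6) :
    amono T u a * T i = (q ^ (Rexp a i)) • amono T u (a + evec i) := by
  fin_cases i
  · exact Rmul0 hq0 hu0 hu1 hu2 hrel h0 h1 h2
  · exact Rmul1 hq0 hu0 hu1 hu2 hrel h0 h1 h2
  · exact Rmul2 hq0 hu0 hu1 hu2 hrel h0 h1 h2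
  · exact Rmul3 hq0 hu0 hu1 hu2 hrel h0 h1 h2
  · exact Rmul4 hq0 hu0 hu1 hu2 hrel h0 h1 h2
  · exact Rmul5 hq0 hu0 hu1 hu2 hrel h0 h1 h2

lemma cone_add_evec {a : Fin 6 → ℤ} (h0 : 0 ≤ a 0) (h1 : 0 ≤ a 1) (h2 : 0 ≤ a 2) (i : Fin 6) :
    0 ≤ (a + evec i) 0 ∧ 0 ≤ (a + evec i) 1 ∧ 0 ≤ (a + evec i) 2 := by
  fin_cases i <;>
    exact ⟨by simp (config := { decide := true }) [evec]; omega,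
      by simp (config := { decide := true }) [evec]; omega,
      by simp (config := { decide := true }) [evec]; omega⟩

lemma qz_eq_zero {q : K} (hq0 : q ≠ 0) (hq : ∀ n : ℕ, 0 < n → q ^ n ≠ 1) {z : ℤ}
    (h : q ^ z = 1) : z = 0 := by
  rcases z with n | n
  · cases n with
    | zero => rfl
    | succ n =>
      rw [Int.ofNat_eq_coe, zpow_natCast] at h
      exact absurd h (hq (n + 1) (by omega))
  · rw [zpow_negSucc, inv_eq_one] at h
    exact absurd h (hq (n + 1) (by omega))

lemma LR_ker {a : Fin 6 → ℤ} (h : ∀ i, Lexp a i = Rexp a i) :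
    a 2 = a 0 ∧ a 3 = a 0 ∧ a 4 = a 1 ∧ a 5 = a 0 := by
  have e0 := h 0
  have e1 := h 1
  have e2 := h 2
  have e3 := h 3
  have e4 := h 4
  have e5 := h 5
  simp (config := { decide := true }) [Lexp, Rexp, Fin.sum_univ_six,
    show (Emat 0 0 : ℤ) = 0 from by decide, show (Emat 0 1 : ℤ) = 1 from by decide, show (Emat 0 2 : ℤ) = 1 from by decide, show (Emat 0 3 : ℤ) = -1 from by decide, show (Emat 0 4 : ℤ) = -1 from by decide, show (Emat 0 5 : ℤ) = 0 from by decide, show (Emat 1 0 : ℤ) = -1 from by decide, show (Emat 1 1 : ℤ) = 0 from by decide, show (Emat 1 2 : ℤ) = 1 from by decide, show (Emat 1 3 : ℤ) = 1 from by decide, show (Emat 1 4 : ℤ) = 0 from by decide, show (Emat 1 5 : ℤ) = -1 from by decide, show (Emat 2 0 : ℤ) = -1 from by decide, show (Emat 2 1 : ℤ) = -1 from by decide, show (Emat 2 2 : ℤ) = 0 from by decide, show (Emat 2 3 : ℤ) = 0 from by decide, show (Emat 2 4 : ℤ) = 1 from by decide, show (Emat 2 5 : ℤ) = 1 from by decide,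 show (Emat 3 0 : ℤ) = 1 from by decide, show (Emat 3 1 : ℤ) = -1 from by decide, show (Emat 3 2 : ℤ) = 0 from by decide, show (Emat 3 3 : ℤ) = 0 from by decide, show (Emat 3 4 : ℤ) = 1 from by decide, show (Emat 3 5 : ℤ) = -1 from by decide, show (Emat 4 0 : ℤ) = 1 from by decide, show (Emat 4 1 : ℤ) = 0 from by decide, show (Emat 4 2 : ℤ) = -1 from by decide, show (Emat 4 3 : ℤ) = -1 from by decide, show (Emat 4 4 : ℤ) = 0 from by decide, show (Emat 4 5 : ℤ) = 1 from by decide, show (Emat 5 0 : ℤ) = 0 from by decide, show (Emat 5 1 : ℤ) = 1 from by decide, show (Emat 5 2 : ℤ) = -1 from by decide, show (Emat 5 3 : ℤ) = 1 from by decide, show (Emat 5 4 : ℤ) = -1 from by decide, show (Emat 5 5 : ℤ) = 0 from by decide] at e0 e1 e2 e3 e4 e5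
  omega

lemma z1_step (hq0 : q ≠ 0) (hu0 : (u 0 : P) = T 3) (hu1 : (u 1 : P) = T 4)
    (hu2 : (u 2 : P) = T 5)
    (hrel : ∀ i j : Fin 6, T i * T j = (q ^ Emat i j) • (T j * T i))
    {a : Fin 6 → ℤ} (h0 : 0 ≤ a 0) (h1 : 0 ≤ a 1) (h2 : 0 ≤ a 2) :
    ∃ c : K, c ≠ 0 ∧ (T 0 * T 3 * T 5 * T 2) * amono T u a
      = c • amono T u (a + evec 2 + evec 5 + evec 3 + evec 0) := by
  have k1 := cone_add_evec h0 h1 h2 2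
  have k2 := cone_add_evec k1.1 k1.2.1 k1.2.2 5
  have k3 := cone_add_evec k2.1 k2.2.1 k2.2.2 3
  have s2 := Lmul2 hq0 hu0 hu1 hu2 hrel h0 h1 h2
  have s5 := Lmul5 hq0 hu0 hu1 hu2 hrel k1.1 k1.2.1 k1.2.2
  have s3 := Lmul3 hq0 hu0 hu1 hu2 hrel k2.1 k2.2.1 k2.2.2
  have s0 := Lmul0 hq0 hu0 hu1 hu2 hrel k3.1 k3.2.1 k3.2.2
  refine ⟨q ^ Lexp a 2 * q ^ Lexp (a + evec 2) 5 * q ^ Lexp (a + evec 2 + evec 5) 3 *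
      q ^ Lexp (a + evec 2 + evec 5 + evec 3) 0,
    mul_ne_zero (mul_ne_zero (mul_ne_zero (zpow_ne_zero _ hq0) (zpow_ne_zero _ hq0))
      (zpow_ne_zero _ hq0)) (zpow_ne_zero _ hq0), ?_⟩
  rw [show (T 0 * T 3 * T 5 * T 2) * amono T u a
        = T 0 * (T 3 * (T 5 * (T 2 * amono T u a))) from by simp only [mul_assoc],
    s2]
  simp only [mul_smul_comm, smul_smul]
  rw [s5]
  simp only [mul_smul_comm, smul_smul]
  rw [s3]
  simp only [mul_smul_comm, smul_smul]
  rw [s0]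
  simp only [mul_smul_comm, smul_smul]

lemma z2_step (hq0 : q ≠ 0) (hu0 : (u 0 : P) = T 3) (hu1 : (u 1 : P) = T 4)
    (hu2 : (u 2 : P) = T 5)
    (hrel : ∀ i j : Fin 6, T i * T j = (q ^ Emat i j) • (T j * T i))
    {a : Fin 6 → ℤ} (h0 : 0 ≤ a 0) (h1 : 0 ≤ a 1) (h2 : 0 ≤ a 2) :
    ∃ c : K, c ≠ 0 ∧ (T 1 * T 4) * amono T u a
      = c • amono T u (a + evec 4 + evec 1) := by
  have k1 := cone_add_evec h0 h1 h2 4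
  have s4 := Lmul4 hq0 hu0 hu1 hu2 hrel h0 h1 h2
  have s1 := Lmul1 hq0 hu0 hu1 hu2 hrel k1.1 k1.2.1 k1.2.2
  refine ⟨q ^ Lexp a 4 * q ^ Lexp (a + evec 4) 1,
    mul_ne_zero (zpow_ne_zero _ hq0) (zpow_ne_zero _ hq0), ?_⟩
  rw [show (T 1 * T 4) * amono T u a = T 1 * (T 4 * amono T u a) from by simp only [mul_assoc],
    s4]
  simp only [mul_smul_comm, smul_smul]
  rw [s1]
  simp only [mul_smul_comm, smul_smul]

def cvec (m n : ℤ) : Fin 6 → ℤ := fun j => if j = 1 ∨ j = 4 then n else m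

lemma cvec_cone (m n : ℕ) : 0 ≤ cvec (m : ℤ) (n : ℤ) 0 ∧ 0 ≤ cvec (m : ℤ) (n : ℤ) 1 ∧
    0 ≤ cvec (m : ℤ) (n : ℤ) 2 := by
  refine ⟨?_, ?_, ?_⟩ <;> simp (config := { decide := true }) [cvec]

lemma cvec_z1 (m n : ℕ) :
    cvec (m : ℤ) (n : ℤ) + evec 2 + evec 5 + evec 3 + evec 0 = cvec ((m + 1 : ℕ) : ℤ) (n : ℤ) := by
  funext j
  fin_cases j <;> simp (config := { decide := true }) [cvec, evec] <;> omega

lemma cvec_z2 (m n : ℕ) :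
    cvec (m : ℤ) (n : ℤ) + evec 4 + evec 1 = cvec (m : ℤ) ((n + 1 : ℕ) : ℤ) := by
  funext j
  fin_cases j <;> simp (config := { decide := true }) [cvec, evec] <;> omega

lemma amono_cvec00 : amono T u (cvec 0 0) = 1 := by
  simp (config := { decide := true }) [amono, cvec]

lemma zpow_amono (hq0 : q ≠ 0) (hu0 : (u 0 : P) = T 3) (hu1 : (u 1 : P) = T 4)
    (hu2 : (u 2 : P) = T 5)
    (hrel : ∀ i j : Fin 6, T i * T j = (q ^ Emat i j) • (T j * T i)) (m n : ℕ) :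
    ∃ c : K, c ≠ 0 ∧ (T 0 * T 3 * T 5 * T 2) ^ m * (T 1 * T 4) ^ n
      = c • amono T u (cvec (m : ℤ) (n : ℤ)) := by
  induction m with
  | zero =>
    rw [pow_zero, one_mul]
    induction n with
    | zero =>
      refine ⟨1, one_ne_zero, ?_⟩
      rw [pow_zero, one_smul]
      exact (amono_cvec00 (T := T) (u := u)).symm
    | succ n ih =>
      obtain ⟨c, hc, he⟩ := ih
      obtain ⟨d, hd, hstep⟩ := z2_step hq0 hu0 hu1 hu2 hrel
        (cvec_cone 0 n).1 (cvec_cone 0 n).2.1 (cvec_cone 0 n).2.2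
      refine ⟨c * d, mul_ne_zero hc hd, ?_⟩
      rw [pow_succ', he, mul_smul_comm, hstep, smul_smul, cvec_z2 0 n]
  | succ m ihm =>
    obtain ⟨c, hc, he⟩ := ihm
    obtain ⟨d, hd, hstep⟩ := z1_step hq0 hu0 hu1 hu2 hrel
      (cvec_cone m n).1 (cvec_cone m n).2.1 (cvec_cone m n).2.2
    refine ⟨c * d, mul_ne_zero hc hd, ?_⟩
    rw [pow_succ', mul_assoc, he, mul_smul_comm, hstep, smul_smul, cvec_z1 m n]

lemma z1_commT (hq0 : q ≠ 0)
    (hrel : ∀ i j : Fin 6, T i * T j = (q ^ Emat i j) • (T j * T i)) (j : Fin 6) :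
    T j * (T 0 * T 3 * T 5 * T 2) = (T 0 * T 3 * T 5 * T 2) * T j := by
  have h := push (push (push (hrel j 0) (hrel j 3)) (hrel j 5)) (hrel j 2)
  rw [h, ← zpow_add₀ hq0, ← zpow_add₀ hq0, ← zpow_add₀ hq0]
  have hz : Emat j 0 + Emat j 3 + Emat j 5 + Emat j 2 = 0 := by fin_cases j <;> decide
  rw [hz, zpow_zero, one_smul]

lemma z2_commT (hq0 : q ≠ 0)
    (hrel : ∀ i j : Fin 6, T i * T j = (q ^ Emat i j) • (T j * T i)) (j : Fin 6) :
    T j * (T 1 * T 4) = (T 1 * T 4) * T j := by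
  have h := push (hrel j 1) (hrel j 4)
  rw [h, ← zpow_add₀ hq0]
  have hz : Emat j 1 + Emat j 4 = 0 := by fin_cases j <;> decide
  rw [hz, zpow_zero, one_smul]

lemma central_of_commT (hu0 : (u 0 : P) = T 3) (hu1 : (u 1 : P) = T 4)
    (hu2 : (u 2 : P) = T 5)
    (hspan : Submodule.span K
      (Set.range
        (fun a : {a : Fin 6 → ℤ // 0 ≤ a 0 ∧ 0 ≤ a 1 ∧ 0 ≤ a 2} => amono T u a)) = ⊤)
    {z : P} (hz : ∀ j, T j * z = z * T j) : z ∈ Subalgebra.center K P := by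
  rw [Subalgebra.mem_center_iff]
  intro b
  have hb : b ∈ Submodule.span K
      (Set.range
        (fun a : {a : Fin 6 → ℤ // 0 ≤ a 0 ∧ 0 ≤ a 1 ∧ 0 ≤ a 2} => amono T u a)) := by
    rw [hspan]; trivial
  induction hb using Submodule.span_induction with
  | mem x hx =>
    obtain ⟨a, rfl⟩ := hx
    have hcz : ∀ j : Fin 6, Commute z (T j) := fun j => (hz j).symm
    have cu0 : Commute z ((u 0 : Pˣ) : P) := by rw [hu0]; exact hcz 3
    have cu1 : Commute z ((u 1 : Pˣ) : P) := by rw [hu1]; exact hcz 4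
    have cu2 : Commute z ((u 2 : Pˣ) : P) := by rw [hu2]; exact hcz 5
    have hca : Commute z (amono T u a.1) := by
      simp only [amono]
      exact ((((((hcz 0).pow_right _).mul_right ((hcz 1).pow_right _)).mul_right
        ((hcz 2).pow_right _)).mul_right (cu0.units_zpow_right _)).mul_right
        (cu1.units_zpow_right _)).mul_right (cu2.units_zpow_right _)
    exact hca.symm.eq
  | zero => simp
  | add x y _ _ hx hy => rw [add_mul, mul_add, hx, hy]
  | smul c x _ hx => rw [smul_mul_assoc, mul_smul_comm, hx]

end Aux

/-- the center of the localization `A` of the quantum affine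
space `K_Λ[T₁,…,T₆]` at the multiplicative set generated by `T₄, T₅, T₆`
is the polynomial ring `K[z₁, z₂]`, where `z₁ = T₁T₄T₆T₃` and `z₂ = T₂T₅`. -/
theorem stmt12 (K : Type) [Field K] (q : K) (hq0 : q ≠ 0)
    (hq : ∀ n : ℕ, 0 < n → q ^ n ≠ 1)
    (P : Type) [Ring P] [Algebra K P] (T : Fin 6 → P) (u : Fin 3 → Pˣ)
    (hu : ∀ k : Fin 3, (u k : P) = T (⟨3, by omega⟩ + k.castLE (by omega)))
    (hrel : ∀ i j : Fin 6, T i * T j = (q ^ Emat i j) • (T j * T i))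
    (hli : LinearIndependent K
      (fun a : {a : Fin 6 → ℤ // 0 ≤ a 0 ∧ 0 ≤ a 1 ∧ 0 ≤ a 2} => amono T u a))
    (hspan : Submodule.span K
      (Set.range
        (fun a : {a : Fin 6 → ℤ // 0 ≤ a 0 ∧ 0 ≤ a 1 ∧ 0 ≤ a 2} => amono T u a)) = ⊤) :
    (Subalgebra.center K P : Subalgebra K P) =
      Algebra.adjoin K {T 0 * T 3 * T 5 * T 2, T 1 * T 4} ∧
    LinearIndependent K
      (fun p : ℕ × ℕ => (T 0 * T 3 * T 5 * T 2) ^ p.1 * (T 1 * T 4) ^ p.2) := by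
  have hu0 : (u 0 : P) = T 3 := (hu 0).trans (congrArg T (by decide))
  have hu1 : (u 1 : P) = T 4 := (hu 1).trans (congrArg T (by decide))
  have hu2 : (u 2 : P) = T 5 := (hu 2).trans (congrArg T (by decide))
  constructor
  · apply le_antisymm
    · -- center ≤ adjoin
      intro x hx
      have hxs : x ∈ Submodule.span K
          (Set.range
            (fun a : {a : Fin 6 → ℤ // 0 ≤ a 0 ∧ 0 ≤ a 1 ∧ 0 ≤ a 2} => amono T u a)) := by
        rw [hspan]; trivial
      obtain ⟨c, hc⟩ := Finsupp.mem_span_range_iff_exists_finsupp.mp hxs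
      have hxc : ∀ b : P, b * x = x * b := Subalgebra.mem_center_iff.mp hx
      have key : ∀ a ∈ c.support, ∀ i : Fin 6, Lexp a.1 i = Rexp a.1 i := by
        intro a ha i
        have hli' := hli.comp
          (fun b : {a : Fin 6 → ℤ // 0 ≤ a 0 ∧ 0 ≤ a 1 ∧ 0 ≤ a 2} =>
            (⟨b.1 + evec i, cone_add_evec b.2.1 b.2.2.1 b.2.2.2 i⟩ :
              {a : Fin 6 → ℤ // 0 ≤ a 0 ∧ 0 ≤ a 1 ∧ 0 ≤ a 2}))
          (by
            intro p r hpr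
            apply Subtype.ext
            have h' := congrArg Subtype.val hpr
            simp only at h'
            exact add_right_cancel h')
        have e1 : T i * x
            = ∑ b ∈ c.support, (c b * q ^ Lexp b.1 i) • amono T u (b.1 + evec i) := by
          rw [← hc, Finsupp.sum, Finset.mul_sum]
          refine Finset.sum_congr rfl fun b _ => ?_
          rw [mul_smul_comm, Lmul hq0 hu0 hu1 hu2 hrel b.2.1 b.2.2.1 b.2.2.2 i, smul_smul]
        have e2 : x * T i
            = ∑ b ∈ c.support, (c b * q ^ Rexp b.1 i) • amono T u (b.1 + evec i) := by
          rw [← hc, Finsupp.sum, Finset.sum_mul]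
          refine Finset.sum_congr rfl fun b _ => ?_
          rw [smul_mul_assoc, Rmul hq0 hu0 hu1 hu2 hrel b.2.1 b.2.2.1 b.2.2.2 i, smul_smul]
        have e3 : ∑ b ∈ c.support,
            ((c b * q ^ Lexp b.1 i) - (c b * q ^ Rexp b.1 i)) •
              ((fun a : {a : Fin 6 → ℤ // 0 ≤ a 0 ∧ 0 ≤ a 1 ∧ 0 ≤ a 2} => amono T u a.1) ∘
                (fun b : {a : Fin 6 → ℤ // 0 ≤ a 0 ∧ 0 ≤ a 1 ∧ 0 ≤ a 2} =>
                  (⟨b.1 + evec i, cone_add_evec b.2.1 b.2.2.1 b.2.2.2 i⟩ :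
                    {a : Fin 6 → ℤ // 0 ≤ a 0 ∧ 0 ≤ a 1 ∧ 0 ≤ a 2}))) b = 0 := by
          simp only [Function.comp_apply, sub_smul, Finset.sum_sub_distrib, ← e1, ← e2,
            hxc (T i), sub_self]
        have h4 := linearIndependent_iff'.mp hli' c.support _ e3 a ha
        have hca : c a ≠ 0 := Finsupp.mem_support_iff.mp ha
        have h5 : q ^ Lexp a.1 i = q ^ Rexp a.1 i :=
          mul_left_cancel₀ hca (sub_eq_zero.mp h4)
        have h6 : q ^ (Lexp a.1 i - Rexp a.1 i) = 1 := by
          rw [zpow_sub₀ hq0, h5, div_self (zpow_ne_zero _ hq0)]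
        have h7 := qz_eq_zero hq0 hq h6
        omega
      rw [← hc, Finsupp.sum]
      refine sum_mem fun a ha => ?_
      refine Subalgebra.smul_mem _ ?_ _
      obtain ⟨ha2, ha3, ha4, ha5⟩ := LR_ker (fun i => key a ha i)
      have t0 : (((a.1 0).toNat : ℕ) : ℤ) = a.1 0 := Int.toNat_of_nonneg a.2.1
      have t1 : (((a.1 1).toNat : ℕ) : ℤ) = a.1 1 := Int.toNat_of_nonneg a.2.2.1
      obtain ⟨p0, p1, p2⟩ := a.2
      have hava : a.1 = cvec (((a.1 0).toNat : ℕ) : ℤ) (((a.1 1).toNat : ℕ) : ℤ) := by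
        funext j
        fin_cases j
        · show a.1 0 = cvec _ _ 0
          simp (config := { decide := true }) [cvec]; omega
        · show a.1 1 = cvec _ _ 1
          simp (config := { decide := true }) [cvec]; omega
        · show a.1 2 = cvec _ _ 2
          simp (config := { decide := true }) [cvec]; omega
        · show a.1 3 = cvec _ _ 3
          simp (config := { decide := true }) [cvec]; omega
        · show a.1 4 = cvec _ _ 4
          simp (config := { decide := true }) [cvec]; omega
        · show a.1 5 = cvec _ _ 5
          simp (config := { decide := true }) [cvec]; omega
      obtain ⟨d, hd, hzz⟩ := zpow_amono hq0 hu0 hu1 hu2 hrel (a.1 0).toNat (a.1 1).toNat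
      have hrepr : amono T u a.1 = d⁻¹ •
          ((T 0 * T 3 * T 5 * T 2) ^ (a.1 0).toNat * (T 1 * T 4) ^ (a.1 1).toNat) := by
        rw [hzz, smul_smul, inv_mul_cancel₀ hd, one_smul, ← hava]
      rw [hrepr]
      refine Subalgebra.smul_mem _ ?_ _
      exact mul_mem (pow_mem (Algebra.subset_adjoin (by simp)) _)
        (pow_mem (Algebra.subset_adjoin (by simp)) _)
    · -- adjoin ≤ center
      apply Algebra.adjoin_le
      intro y hy
      rcases hy with rfl | rfl
      · exact central_of_commT hu0 hu1 hu2 hspan (z1_commT hq0 hrel)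
      · exact central_of_commT hu0 hu1 hu2 hspan (z2_commT hq0 hrel)
  · -- linear independence of the powers
    have hw : ∀ p : ℕ × ℕ, ∃ cu : Kˣ,
        (T 0 * T 3 * T 5 * T 2) ^ p.1 * (T 1 * T 4) ^ p.2
          = (cu : K) • amono T u (cvec (p.1 : ℤ) (p.2 : ℤ)) := by
      intro p
      obtain ⟨d, hd, he⟩ := zpow_amono hq0 hu0 hu1 hu2 hrel p.1 p.2
      exact ⟨Units.mk0 d hd, he⟩
    choose w hwspec using hw
    have hginj : Function.Injective
        (fun p : ℕ × ℕ => (⟨cvec (p.1 : ℤ) (p.2 : ℤ), cvec_cone p.1 p.2⟩ :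
          {a : Fin 6 → ℤ // 0 ≤ a 0 ∧ 0 ≤ a 1 ∧ 0 ≤ a 2})) := by
      intro p r h
      have h0 := congrFun (congrArg Subtype.val h) 0
      have h1 := congrFun (congrArg Subtype.val h) 1
      simp (config := { decide := true }) [cvec] at h0 h1
      exact Prod.ext h0 h1
    have hrw : (fun p : ℕ × ℕ => (T 0 * T 3 * T 5 * T 2) ^ p.1 * (T 1 * T 4) ^ p.2)
        = fun p : ℕ × ℕ => w p •
            ((fun a : {a : Fin 6 → ℤ // 0 ≤ a 0 ∧ 0 ≤ a 1 ∧ 0 ≤ a 2} => amono T u a.1) ∘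
              (fun p : ℕ × ℕ => (⟨cvec (p.1 : ℤ) (p.2 : ℤ), cvec_cone p.1 p.2⟩ :
                {a : Fin 6 → ℤ // 0 ≤ a 0 ∧ 0 ≤ a 1 ∧ 0 ≤ a 2}))) p := by
      funext p
      rw [hwspec p, Units.smul_def]
      rfl
    rw [hrw]
    exact (hli.comp _ hginj).units_smul w
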